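/- arXiv:2511.12970 — 2 statements merged into one kernel-verified Lean document; each statement's English description precedes it below -/
import Mathlib

section
/- Let p, q ∈ (1,∞), α, β ∈ (−1,∞), a, b ∈ ℝ with α + 1 < p(b+1). Set λ = (n+β)/q − (n+α)/p, c = n + a + b + λ, and τ = c − a − b + α. Then τ = (n+α)/p' + (n+β)/q > 0, and there exist real numbers r < 0 with −(1+β)/q < r and s ∈ ℝ such that −(1+α)/p' − (b−α)γ < s < (b−α)δ, where γ = ((n+α)/p' + s − r)/τ and δ = ((n+β)/q + r − s)/τ; moreover γ + δ = 1. -/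
/-!
Put `X = (n+α)/p'`, `Y = (n+β)/q`, `P = (1+α)/p'` and `d = b - α`, so that `τ = X + Y`.
The two required inequalities on `s` say that the affine functions
`s ↦ s (τ + d)/τ + P + d (X - r)/τ` and `s ↦ d (Y + r)/τ - s (τ + d)/τ` are positive. Their sum is
the constant `P + d = 1 + b - (1+α)/p`, which is positive exactly by `α + 1 < p(b+1)`. The slope
`(τ + d)/τ` is positive (as `X ≥ P` for `n ≥ 1`), so choosing `s` to make the two functions equal
makes both positive. The exponent `r` can be any point of `(-(1+β)/q, 0)`.
-/

theorem Real.div_conjExponent {p : ℝ} (hp : 1 < p) (x : ℝ) :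
    x / p.conjExponent = x - x / p := by
  rw [div_eq_mul_inv, ← (Real.HolderConjugate.conjExponent hp).one_sub_inv]
  ring

theorem exists_pos_add_pos_sub {k c₁ c₂ : ℝ} (hk : k ≠ 0) (h : 0 < c₁ + c₂) :
    ∃ s, 0 < k * s + c₁ ∧ 0 < c₂ - k * s := by
  refine ⟨(c₂ - c₁) / (2 * k), ?_, ?_⟩ <;>
  · rw [mul_div_assoc', mul_comm 2 k, mul_div_mul_left _ _ hk]
    linarith

theorem exists_weighted_between {X Y P d : ℝ} (hτ : 0 < X + Y) (hτd : 0 < X + Y + d)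
    (hPd : 0 < P + d) (r : ℝ) :
    ∃ s, -P - d * ((X + s - r) / (X + Y)) < s ∧ s < d * ((Y + r - s) / (X + Y)) := by
  have hk : 1 + d / (X + Y) ≠ 0 := by
    rw [one_add_div hτ.ne']
    positivity
  have hsum : 0 < (P + d * (X - r) / (X + Y)) + d * (Y + r) / (X + Y) := by
    rwa [add_assoc, ← add_div, ← mul_add, show X - r + (Y + r) = X + Y by ring,
      mul_div_cancel_right₀ _ hτ.ne']
  obtain ⟨s, h₁, h₂⟩ := exists_pos_add_pos_sub hk hsum
  refine ⟨s, ?_, ?_⟩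
  · linarith [show (1 + d / (X + Y)) * s + (P + d * (X - r) / (X + Y))
        = s + d * ((X + s - r) / (X + Y)) + P by ring]
  · linarith [show d * (Y + r) / (X + Y) - (1 + d / (X + Y)) * s
        = d * ((Y + r - s) / (X + Y)) - s by ring]

theorem stmt9 (n : ℕ) (hn : 0 < n) (p q α β a b : ℝ)
    (hp : 1 < p) (hq : 1 < q) (hα : -1 < α) (hβ : -1 < β)
    (hab : α + 1 < p * (b + 1)) :
    ∀ p' lam c τ : ℝ, p' = p / (p - 1) →
      lam = ((n : ℝ) + β) / q - ((n : ℝ) + α) / p →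
      c = (n : ℝ) + a + b + lam → τ = c - a - b + α →
      τ = ((n : ℝ) + α) / p' + ((n : ℝ) + β) / q ∧ 0 < τ ∧
      ∃ r s : ℝ, r < 0 ∧ -(1 + β) / q < r ∧
        ∀ γ δ : ℝ, γ = (((n : ℝ) + α) / p' + s - r) / τ →
          δ = (((n : ℝ) + β) / q + r - s) / τ →
          (-(1 + α) / p' - (b - α) * γ < s ∧ s < (b - α) * δ ∧ γ + δ = 1) := by
  intro p' lam c τ hp'
  rw [show p' = p.conjExponent from hp']
  rintro rfl rfl rfl
  have hn₁ : (1 : ℝ) ≤ n := by exact_mod_cast hn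
  have hp' : 0 < p.conjExponent := (Real.HolderConjugate.conjExponent hp).symm.pos
  have hX : 0 < ((n : ℝ) + α) / p.conjExponent := div_pos (by linarith) hp'
  have hY : 0 < ((n : ℝ) + β) / q := div_pos (by linarith) (by linarith)
  have hPX : (1 + α) / p.conjExponent ≤ ((n : ℝ) + α) / p.conjExponent :=
    div_le_div_of_nonneg_right (by linarith) hp'.le
  have hPd : 0 < (1 + α) / p.conjExponent + (b - α) := by
    have : (1 + α) / p < b + 1 := (div_lt_iff₀ (by linarith)).2 (by linarith)
    rw [Real.div_conjExponent hp]
    linarith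
  have hτ : (n : ℝ) + a + b + (((n : ℝ) + β) / q - ((n : ℝ) + α) / p) - a - b + α
      = ((n : ℝ) + α) / p.conjExponent + ((n : ℝ) + β) / q := by
    rw [Real.div_conjExponent hp]
    ring
  rw [hτ]
  refine ⟨rfl, by positivity, ?_⟩
  obtain ⟨r, hβr, hr⟩ := exists_between (div_neg_of_neg_of_pos (by linarith) (by linarith) :
    -(1 + β) / q < 0)
  obtain ⟨s, hs₁, hs₂⟩ := exists_weighted_between (X := ((n : ℝ) + α) / p.conjExponent)
    (Y := ((n : ℝ) + β) / q) (by positivity) (by linarith) hPd r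
  refine ⟨r, s, hr, hβr, ?_⟩
  rintro γ δ rfl rfl
  refine ⟨by rwa [neg_div], hs₂, ?_⟩
  rw [← add_div, div_eq_one_iff_eq (by positivity)]
  ring
end

section
/- Let n ≥ 2 and z, u ∈ T_{Λₙ}, the tube over the forward light cone. Then 𝔤(Im u) ≤ |Q(z − conj(u))| and 𝔤(Im z) ≤ |Q(z − conj(u))|, i.e., the ratios 𝔤(Im u)/|Q(z−conj(u))| and 𝔤(Im z)/|Q(z−conj(u))| are bounded above by an absolute constant. -/
noncomputable section
open MeasureTheory Complex
open scoped ENNReal NNReal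

def glc (n : ℕ) (y : Fin n → ℝ) : ℝ :=
  2 * (∑ i, if i.val = n - 1 then (y i) ^ 2 else 0) - ∑ i, (y i) ^ 2

def lastC (n : ℕ) (y : Fin n → ℝ) : ℝ := ∑ i, if i.val = n - 1 then y i else 0

def cone (n : ℕ) : Set (Fin n → ℝ) := {y | 0 < lastC n y ∧ 0 < glc n y}

def imV {n : ℕ} (z : Fin n → ℂ) : Fin n → ℝ := fun i => (z i).im

def tube (n : ℕ) : Set (Fin n → ℂ) := {z | imV z ∈ cone n}

def Qlc (n : ℕ) (z : Fin n → ℂ) : ℂ :=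
  (∑ i, (z i) ^ 2) - 2 * ∑ i, if i.val = n - 1 then (z i) ^ 2 else 0

def conjV {n : ℕ} (z : Fin n → ℂ) : Fin n → ℂ := fun i => (starRingEnd ℂ) (z i)

def wMeasure (n : ℕ) (a : ℝ) : Measure (Fin n → ℂ) :=
  (volume.restrict (tube n)).withDensity fun z => ENNReal.ofReal (glc n (imV z) ^ a)

def lpNormE {X : Type*} [MeasurableSpace X] (p : ℝ≥0∞) (μ : Measure X) (g : X → ℝ≥0∞) : ℝ≥0∞ :=
  if p = ∞ then essSup g μ else (∫⁻ x, g x ^ p.toReal ∂μ) ^ (1 / p.toReal)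

def mixedNormE (n : ℕ) (p1 p2 : ℝ≥0∞) (a1 a2 : ℝ)
    (f : (Fin n → ℂ) → (Fin n → ℂ) → ℝ≥0∞) : ℝ≥0∞ :=
  lpNormE p2 (wMeasure n a2) fun w => lpNormE p1 (wMeasure n a1) fun z => f z w

def TopFR (n : ℕ) (a1 a2 b1 b2 c1 c2 : ℝ)
    (f : (Fin n → ℂ) → (Fin n → ℂ) → ℂ) (z w : Fin n → ℂ) : ℂ :=
  ((glc n (imV z) ^ a1 : ℝ) : ℂ) * ((glc n (imV w) ^ a2 : ℝ) : ℂ) *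
    ∫ u in tube n, ∫ η in tube n,
      ((glc n (imV u) ^ b1 : ℝ) : ℂ) * ((glc n (imV η) ^ b2 : ℝ) : ℂ) * f u η /
        (Qlc n (z - conjV u) ^ (c1 : ℂ) * Qlc n (w - conjV η) ^ (c2 : ℂ))

def SopFR (n : ℕ) (a1 a2 b1 b2 c1 c2 : ℝ)
    (f : (Fin n → ℂ) → (Fin n → ℂ) → ℂ) (z w : Fin n → ℂ) : ℂ :=
  ((glc n (imV z) ^ a1 : ℝ) : ℂ) * ((glc n (imV w) ^ a2 : ℝ) : ℂ) *
    ∫ u in tube n, ∫ η in tube n,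
      ((glc n (imV u) ^ b1 : ℝ) : ℂ) * ((glc n (imV η) ^ b2 : ℝ) : ℂ) * f u η /
        (((‖Qlc n (z - conjV u)‖ ^ c1 : ℝ) : ℂ) *
         ((‖Qlc n (w - conjV η)‖ ^ c2 : ℝ) : ℂ))

def BddOp (n : ℕ) (p1 p2 q1 q2 : ℝ≥0∞) (a1 a2 b1 b2 : ℝ)
    (T : ((Fin n → ℂ) → (Fin n → ℂ) → ℂ) → (Fin n → ℂ) → (Fin n → ℂ) → ℂ) : Prop :=
  ∃ C : ℝ≥0∞, C < ⊤ ∧ ∀ f,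
    mixedNormE n q1 q2 b1 b2 (fun z w => (‖T f z w‖₊ : ℝ≥0∞)) ≤
      C * mixedNormE n p1 p2 a1 a2 fun z w => (‖f z w‖₊ : ℝ≥0∞)

def iRv (n : ℕ) (r : ℝ) : Fin n → ℂ := fun i => if i.val = n - 1 then (r : ℂ) * Complex.I else 0

def fR (n : ℕ) (r l1 l2 s1 s2 : ℝ) (z w : Fin n → ℂ) : ℂ :=
  ((glc n (imV z) ^ l1 : ℝ) : ℂ) * ((glc n (imV w) ^ l2 : ℝ) : ℂ) /
    (Qlc n (z + iRv n r) ^ (s1 : ℂ) * Qlc n (w + iRv n r) ^ (s2 : ℂ))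

/-!
Write `z - conj u = a + i b` with `a = Re z - Re u` and `b = Im z + Im u`. The Lorentz form `B`
is positive on pairs of future timelike vectors, so `𝔤(b) ≥ 𝔤(Im z), 𝔤(Im u)`. Moreover
`|Q(a + i b)|² = (𝔤(a) - 𝔤(b))² + 4 B(a, b)²`, and the reverse Cauchy–Schwarz inequality
`𝔤(a) 𝔤(b) ≤ B(a, b)²` (valid since `𝔤(b) ≥ 0`) makes this at least `𝔤(b)²`.
-/

open Finset

/-- Reverse Cauchy–Schwarz in coordinates: `p, q` are time components, `Sa, Sb` the squared
spatial norms and `C` the spatial inner product. -/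
lemma sub_mul_sub_le_sq_of_sq_le_mul {p q Sa Sb C : ℝ} (hSa : 0 ≤ Sa) (hSb : 0 ≤ Sb)
    (hC : C ^ 2 ≤ Sa * Sb) (hq : Sb ≤ q ^ 2) : (p ^ 2 - Sa) * (q ^ 2 - Sb) ≤ (p * q - C) ^ 2 := by
  rcases le_or_gt (p ^ 2) Sa with hp | hp
  · nlinarith [mul_nonpos_of_nonpos_of_nonneg (sub_nonpos.2 hp) (sub_nonneg.2 hq),
      sq_nonneg (p * q - C)]
  rcases hSb.eq_or_lt with h | h
  · have hC0 : C = 0 := by nlinarith [sq_nonneg C]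
    subst hC0
    nlinarith [mul_nonneg hSa (sq_nonneg q)]
  · nlinarith [sq_nonneg (p * Sb - C * q), mul_nonneg (sub_nonneg.2 hC) (sub_nonneg.2 hq)]

section LorentzForm

variable {ι : Type*} [Fintype ι] [DecidableEq ι]

/-- The Lorentz form with time coordinate `m`; `glc` and `-Qlc` are its diagonals for
`m = Fin.last k`. -/
def lorentzForm {R : Type*} [CommRing R] (m : ι) (y v : ι → R) : R :=
  y m * v m - ∑ i ∈ univ.erase m, y i * v i

def futureCone (m : ι) : Set (ι → ℝ) := {y | 0 < y m ∧ 0 < lorentzForm m y y}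

lemma lorentzForm_add_self {R : Type*} [CommRing R] (m : ι) (y v : ι → R) :
    lorentzForm m (y + v) (y + v) =
      lorentzForm m y y + 2 * lorentzForm m y v + lorentzForm m v v := by
  simp only [lorentzForm, Pi.add_apply, add_mul, mul_add, sum_add_distrib]
  have hsymm : ∑ i ∈ univ.erase m, v i * y i = ∑ i ∈ univ.erase m, y i * v i :=
    sum_congr rfl fun i _ => mul_comm _ _
  rw [hsymm]
  ring

lemma lorentzForm_mul_le_sq (m : ι) (a b : ι → ℝ) (hb : 0 ≤ lorentzForm m b b) :
    lorentzForm m a a * lorentzForm m b b ≤ lorentzForm m a b ^ 2 := by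
  have hCS := sum_mul_sq_le_sq_mul_sq (univ.erase m) a b
  simp only [lorentzForm, ← sq] at hb ⊢
  exact sub_mul_sub_le_sq_of_sq_le_mul (sum_nonneg fun i _ => sq_nonneg _)
    (sum_nonneg fun i _ => sq_nonneg _) hCS (sub_nonneg.1 hb)

lemma lorentzForm_pos_of_mem_futureCone {m : ι} {y v : ι → ℝ} (hy : y ∈ futureCone m)
    (hv : v ∈ futureCone m) : 0 < lorentzForm m y v := by
  obtain ⟨hym, hyy⟩ := hy
  obtain ⟨hvm, hvv⟩ := hv
  have hCS := sum_mul_sq_le_sq_mul_sq (univ.erase m) y v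
  have hSy : 0 ≤ ∑ i ∈ univ.erase m, y i ^ 2 := sum_nonneg fun i _ => sq_nonneg _
  have hSv : 0 ≤ ∑ i ∈ univ.erase m, v i ^ 2 := sum_nonneg fun i _ => sq_nonneg _
  simp only [lorentzForm, ← sq, sub_pos] at hyy hvv ⊢
  nlinarith [mul_pos hym hvm, mul_lt_mul'' hyy hvv hSy hSv]

lemma lorentzForm_le_add_self {m : ι} {y v : ι → ℝ} (hy : y ∈ futureCone m)
    (hv : v ∈ futureCone m) : lorentzForm m y y ≤ lorentzForm m (y + v) (y + v) := by
  rw [lorentzForm_add_self]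
  linarith [lorentzForm_pos_of_mem_futureCone hy hv, hv.2]

lemma re_lorentzForm (m : ι) (w : ι → ℂ) :
    (lorentzForm m w w).re =
      lorentzForm m (fun i => (w i).re) (fun i => (w i).re) -
        lorentzForm m (fun i => (w i).im) (fun i => (w i).im) := by
  simp only [lorentzForm, sub_re, re_sum, mul_re, sum_sub_distrib]
  ring

lemma im_lorentzForm (m : ι) (w : ι → ℂ) :
    (lorentzForm m w w).im = 2 * lorentzForm m (fun i => (w i).re) (fun i => (w i).im) := by
  simp only [lorentzForm, sub_im, im_sum, mul_im, mul_sub, mul_sum]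
  congr 1
  · ring
  · exact sum_congr rfl fun i _ => by ring

lemma lorentzForm_im_le_norm (m : ι) (w : ι → ℂ)
    (hw : 0 ≤ lorentzForm m (fun i => (w i).im) (fun i => (w i).im)) :
    lorentzForm m (fun i => (w i).im) (fun i => (w i).im) ≤ ‖lorentzForm m w w‖ := by
  set a : ι → ℝ := fun i => (w i).re
  set b : ι → ℝ := fun i => (w i).im
  have hrev := lorentzForm_mul_le_sq m a b hw
  have hnorm : ‖lorentzForm m w w‖ ^ 2 =
      (lorentzForm m a a - lorentzForm m b b) ^ 2 +
        4 * lorentzForm m a b ^ 2 := by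
    rw [Complex.sq_norm, Complex.normSq_apply, re_lorentzForm, im_lorentzForm]
    ring
  refine (pow_le_pow_iff_left₀ hw (norm_nonneg _) two_ne_zero).1 ?_
  rw [hnorm]
  nlinarith

end LorentzForm

lemma sum_ite_val_eq_last {M : Type*} [AddCommMonoid M] (k : ℕ) (f : Fin (k + 1) → M) :
    (∑ i : Fin (k + 1), if i.val = k + 1 - 1 then f i else 0) = f (Fin.last k) := by
  have h : ∀ i : Fin (k + 1), i.val = k + 1 - 1 ↔ i = Fin.last k := by simp [Fin.ext_iff]
  simp_rw [h]
  simp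

lemma glc_succ (k : ℕ) (y : Fin (k + 1) → ℝ) : glc (k + 1) y = lorentzForm (Fin.last k) y y := by
  rw [glc, lorentzForm, sum_ite_val_eq_last, ← add_sum_erase _ _ (mem_univ (Fin.last k))]
  simp only [sq]
  ring

lemma cone_succ (k : ℕ) : cone (k + 1) = futureCone (Fin.last k) := by
  ext y
  simp only [cone, futureCone, lastC, glc_succ, sum_ite_val_eq_last, Set.mem_ofPred_eq]

lemma Qlc_succ (k : ℕ) (w : Fin (k + 1) → ℂ) : Qlc (k + 1) w = -lorentzForm (Fin.last k) w w := by
  rw [Qlc, lorentzForm, sum_ite_val_eq_last, ← add_sum_erase _ _ (mem_univ (Fin.last k))]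
  simp only [sq]
  ring

theorem stmt15_general (n : ℕ) :
    ∀ z ∈ tube n, ∀ u ∈ tube n,
      glc n (imV u) ≤ ‖Qlc n (z - conjV u)‖ ∧
      glc n (imV z) ≤ ‖Qlc n (z - conjV u)‖ := by
  intro z hz u hu
  cases n with
  | zero => simp [tube, cone, lastC] at hz
  | succ k =>
    rw [tube, Set.mem_ofPred_eq, cone_succ] at hz hu
    have him : imV (z - conjV u) = imV z + imV u := by ext; simp [imV, conjV]
    set b := imV z + imV u
    have hbound : 0 ≤ lorentzForm (Fin.last k) b b →
        lorentzForm (Fin.last k) b b ≤ ‖Qlc (k + 1) (z - conjV u)‖ := by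
      rw [Qlc_succ, norm_neg, ← him]
      exact lorentzForm_im_le_norm _ _
    have hzb : lorentzForm (Fin.last k) (imV z) (imV z) ≤ lorentzForm (Fin.last k) b b :=
      lorentzForm_le_add_self hz hu
    have hub : lorentzForm (Fin.last k) (imV u) (imV u) ≤ lorentzForm (Fin.last k) b b := by
      rw [show b = imV u + imV z from add_comm _ _]
      exact lorentzForm_le_add_self hu hz
    rw [glc_succ, glc_succ]
    exact ⟨hub.trans (hbound (hu.2.le.trans hub)), hzb.trans (hbound (hz.2.le.trans hzb))⟩

theorem stmt15 (n : ℕ) (hn : 2 ≤ n) :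
    ∀ z ∈ tube n, ∀ u ∈ tube n,
      glc n (imV u) ≤ ‖Qlc n (z - conjV u)‖ ∧
      glc n (imV z) ≤ ‖Qlc n (z - conjV u)‖ :=
  stmt15_general n
end
end
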